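/- Fix μ, r ∈ ℝ, σ > 0, γ > 0 with γ ≠ 1, λ > 0, T > 0, ψ, θ ∈ ℝ, an integer K ≥ 1, and set Δt = T/K. Let a₀, …, a_{K−1} be i.i.d. Gaussian random variables with mean θ and variance λ/(γσ²), and let ΔB₀, …, ΔB_{K−1} be i.i.d. Gaussian with mean 0 and variance Δt, all 2K variables mutually independent. Define, for each k, R_k = exp( (r + (μ−r)a_k − (1/2)σ²a_k²)Δt + σ a_k ΔB_k ) and ê(ψ,θ) = Σ_{k=0}^{K−1} [γσ²(a_k − θ)/(λ(1−γ))] · ( R_k^{1−γ} · exp((−ψ + λ(1−γ)/2)Δt) − 1 ). Set A₁ = (1−γ)(r + (μ−r)θ − (γ/2)σ²θ² + λ/2) − ψ, A₂ = (1−γ)(μ − r − θγσ²)·√(λ/(γσ²)), and A₃ = (γ−1)λ. If 1 − A₃Δt > 0, then E[ê(ψ,θ)] = T(μ − r − θγσ²) · exp( A₁Δt + A₂²Δt² / (2(1 − A₃Δt)) ) · (1 − A₃Δt)^{−3/2}. -/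

import Mathlib

/-!
Each summand of `ê` has the form `C (a - θ) (exp (α a² + β a + s a ΔB + c) - 1)`. Integrating out
the independent increment `ΔB` first, its moment generating function replaces `α` by
`α' = α + Δt s² / 2`. Exponential tilting then does the rest: a Gaussian density of variance `v`
times `exp (α' x² + β x)` is `(1 - 2α'v)^(-1/2) exp (…)` times a Gaussian density of variance
`v / (1 - 2α'v)` whose mean is shifted by `v (β + 2α'θ) / (1 - 2α'v)`, and this shift is what
`E[(a - θ) exp (α' a² + β a)]` picks up. The `-1` term has mean zero, and `1 - 2α'v = 1 - A₃Δt`.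
-/

open MeasureTheory ProbabilityTheory Real
open scoped NNReal

/-- The time-discretized policy-gradient learning signal
`ê(ψ,θ) = Σ_k [γσ²(a_k − θ)/(λ(1−γ))]·(R_k^{1−γ} exp((−ψ + λ(1−γ)/2)Δt) − 1)`,
where `R_k = exp((r + (μ−r)a_k − σ²a_k²/2)Δt + σ a_k ΔB_k)` and `Δt = T/K`. -/
noncomputable def ehat (μ r σ γ lam T ψ θ : ℝ) (K : ℕ) {Ω : Type}
    (a ΔB : Fin K → Ω → ℝ) (ω : Ω) : ℝ :=
  ∑ k : Fin K, (γ * σ^2 * (a k ω - θ) / (lam * (1 - γ))) *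
    ((Real.exp ((r + (μ - r) * a k ω - (1/2) * σ^2 * (a k ω)^2) * (T / (K : ℝ))
        + σ * a k ω * ΔB k ω)) ^ (1 - γ)
      * Real.exp ((-ψ + lam * (1 - γ) / 2) * (T / (K : ℝ))) - 1)

namespace ProbabilityTheory

lemma integrable_gaussianReal_iff {m : ℝ} {v : ℝ≥0} (hv : v ≠ 0) {f : ℝ → ℝ} :
    Integrable f (gaussianReal m v) ↔ Integrable (fun x ↦ gaussianPDFReal m v x * f x) := by
  rw [gaussianReal_of_var_ne_zero m hv, integrable_withDensity_iff_integrable_smul'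
    (measurable_gaussianPDF m v) (ae_of_all _ fun _ ↦ gaussianPDF_lt_top)]
  simp [toReal_gaussianPDF]

section QuadraticTilt

variable {m v α β : ℝ}

lemma gaussianPDFReal_mul_exp_quadratic (hv : 0 < v) (hαv : 2 * α * v < 1) (x : ℝ) :
    gaussianPDFReal m v.toNNReal x * exp (α * x ^ 2 + β * x)
      = (1 - 2 * α * v) ^ (-(1 / 2) : ℝ)
          * exp (α * m ^ 2 + β * m + (β + 2 * α * m) ^ 2 * v / (2 * (1 - 2 * α * v)))
          * gaussianPDFReal (m + v * (β + 2 * α * m) / (1 - 2 * α * v))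
              (v / (1 - 2 * α * v)).toNNReal x := by
  have hκ : 0 < 1 - 2 * α * v := by linarith
  have hexp : -(x - m) ^ 2 / (2 * v) + (α * x ^ 2 + β * x)
      = (α * m ^ 2 + β * m + (β + 2 * α * m) ^ 2 * v / (2 * (1 - 2 * α * v)))
        + -(x - (m + v * (β + 2 * α * m) / (1 - 2 * α * v))) ^ 2
          / (2 * (v / (1 - 2 * α * v))) := by
    generalize hκdef : 1 - 2 * α * v = κ at hκ ⊢
    field_simp
    linear_combination -(x - m) ^ 2 * κ * hκdef
  have hsqrt : √(2 * π * (v / (1 - 2 * α * v))) = √(2 * π * v) / √(1 - 2 * α * v) := by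
    rw [← mul_div_assoc, Real.sqrt_div (by positivity)]
  simp only [gaussianPDFReal, Real.coe_toNNReal _ hv.le,
    Real.coe_toNNReal _ (div_pos hv hκ).le]
  rw [mul_assoc, ← Real.exp_add, hexp, Real.exp_add, Real.rpow_neg hκ.le, ← Real.sqrt_eq_rpow,
    hsqrt]
  have hs : √(1 - 2 * α * v) ≠ 0 := (Real.sqrt_pos.2 hκ).ne'
  generalize √(1 - 2 * α * v) = s at hs ⊢
  field_simp

lemma integral_mul_exp_quadratic_gaussianReal (hv : 0 < v) (hαv : 2 * α * v < 1)
    (f : ℝ → ℝ) :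
    ∫ x, f x * exp (α * x ^ 2 + β * x) ∂gaussianReal m v.toNNReal
      = (1 - 2 * α * v) ^ (-(1 / 2) : ℝ)
          * exp (α * m ^ 2 + β * m + (β + 2 * α * m) ^ 2 * v / (2 * (1 - 2 * α * v)))
          * ∫ x, f x ∂gaussianReal (m + v * (β + 2 * α * m) / (1 - 2 * α * v))
              (v / (1 - 2 * α * v)).toNNReal := by
  have hκ : 0 < 1 - 2 * α * v := by linarith
  rw [integral_gaussianReal_eq_integral_smul (Real.toNNReal_pos.2 hv).ne',
    integral_gaussianReal_eq_integral_smul (Real.toNNReal_pos.2 (div_pos hv hκ)).ne',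
    ← integral_const_mul]
  congr 1 with x
  rw [smul_eq_mul, smul_eq_mul, mul_left_comm, gaussianPDFReal_mul_exp_quadratic hv hαv]
  ring

lemma integrable_mul_exp_quadratic_gaussianReal (hv : 0 < v) (hαv : 2 * α * v < 1)
    {f : ℝ → ℝ} (hf : Integrable f (gaussianReal (m + v * (β + 2 * α * m) / (1 - 2 * α * v))
      (v / (1 - 2 * α * v)).toNNReal)) :
    Integrable (fun x ↦ f x * exp (α * x ^ 2 + β * x)) (gaussianReal m v.toNNReal) := by
  have hκ : 0 < 1 - 2 * α * v := by linarith
  rw [integrable_gaussianReal_iff (Real.toNNReal_pos.2 (div_pos hv hκ)).ne'] at hf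
  rw [integrable_gaussianReal_iff (Real.toNNReal_pos.2 hv).ne']
  refine (hf.const_mul ((1 - 2 * α * v) ^ (-(1 / 2) : ℝ)
    * exp (α * m ^ 2 + β * m + (β + 2 * α * m) ^ 2 * v / (2 * (1 - 2 * α * v))))).congr
    (ae_of_all _ fun x ↦ ?_)
  simp only
  rw [mul_left_comm (gaussianPDFReal _ _ _), gaussianPDFReal_mul_exp_quadratic hv hαv]
  ring

lemma integral_sub_mul_exp_quadratic_gaussianReal (hv : 0 < v) (hαv : 2 * α * v < 1) :
    ∫ x, (x - m) * exp (α * x ^ 2 + β * x) ∂gaussianReal m v.toNNReal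
      = v * (β + 2 * α * m) * (1 - 2 * α * v) ^ (-(3 / 2) : ℝ)
          * exp (α * m ^ 2 + β * m + (β + 2 * α * m) ^ 2 * v / (2 * (1 - 2 * α * v))) := by
  have hκ : 0 < 1 - 2 * α * v := by linarith
  have hid : Integrable (fun x ↦ x) (gaussianReal (m + v * (β + 2 * α * m) / (1 - 2 * α * v))
      (v / (1 - 2 * α * v)).toNNReal) :=
    (memLp_id_gaussianReal 1).integrable le_rfl
  rw [integral_mul_exp_quadratic_gaussianReal hv hαv, integral_sub hid (integrable_const m),
    integral_id_gaussianReal, integral_const, probReal_univ, one_smul,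
    show (-(3 / 2) : ℝ) = -(1 / 2) - 1 by norm_num, Real.rpow_sub_one hκ.ne']
  ring

end QuadraticTilt

section BrownianIncrement

variable {m v α β s : ℝ} {w : ℝ≥0}

lemma integral_mul_exp_bilinear_gaussianReal (c x : ℝ) :
    ∫ y, c * exp (α * x ^ 2 + β * x + s * x * y) ∂gaussianReal 0 w
      = c * exp ((α + w * s ^ 2 / 2) * x ^ 2 + β * x) := by
  have hmgf := congrFun (mgf_id_gaussianReal (μ := 0) (v := w)) (s * x)
  simp only [mgf, id] at hmgf
  simp_rw [Real.exp_add (α * x ^ 2 + β * x), ← mul_assoc, integral_const_mul, hmgf, mul_assoc,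
    ← Real.exp_add]
  ring_nf

lemma integrable_sub_mul_exp_bilinear_prod (hv : 0 < v)
    (hαv : 2 * (α + w * s ^ 2 / 2) * v < 1) :
    Integrable (fun p : ℝ × ℝ ↦ (p.1 - m) * exp (α * p.1 ^ 2 + β * p.1 + s * p.1 * p.2))
      ((gaussianReal m v.toNNReal).prod (gaussianReal 0 w)) := by
  have hmeas : AEStronglyMeasurable
      (fun p : ℝ × ℝ ↦ (p.1 - m) * exp (α * p.1 ^ 2 + β * p.1 + s * p.1 * p.2))
      ((gaussianReal m v.toNNReal).prod (gaussianReal 0 w)) := by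
    fun_prop
  refine (integrable_prod_iff hmeas).2 ⟨ae_of_all _ fun x ↦ ?_, ?_⟩
  · simp_rw [Real.exp_add (α * x ^ 2 + β * x), ← mul_assoc]
    exact (integrable_exp_mul_gaussianReal (s * x)).const_mul _
  · have hsub : Integrable (fun x ↦ x - m)
        (gaussianReal
          (m + v * (β + 2 * (α + w * s ^ 2 / 2) * m) / (1 - 2 * (α + w * s ^ 2 / 2) * v))
          (v / (1 - 2 * (α + w * s ^ 2 / 2) * v)).toNNReal) :=
      ((memLp_id_gaussianReal 1).integrable le_rfl).sub (integrable_const m)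
    refine (integrable_mul_exp_quadratic_gaussianReal hv hαv hsub).norm.congr
      (ae_of_all _ fun x ↦ ?_)
    simp only [norm_mul, Real.norm_eq_abs, abs_of_pos (Real.exp_pos _)]
    rw [integral_mul_exp_bilinear_gaussianReal]

lemma integral_sub_mul_exp_bilinear_prod (hv : 0 < v)
    (hαv : 2 * (α + w * s ^ 2 / 2) * v < 1) :
    ∫ p, (p.1 - m) * exp (α * p.1 ^ 2 + β * p.1 + s * p.1 * p.2)
        ∂(gaussianReal m v.toNNReal).prod (gaussianReal 0 w)
      = v * (β + 2 * (α + w * s ^ 2 / 2) * m) * (1 - 2 * (α + w * s ^ 2 / 2) * v) ^ (-(3 / 2) : ℝ)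
          * exp ((α + w * s ^ 2 / 2) * m ^ 2 + β * m
            + (β + 2 * (α + w * s ^ 2 / 2) * m) ^ 2 * v
              / (2 * (1 - 2 * (α + w * s ^ 2 / 2) * v))) := by
  rw [integral_prod _ (integrable_sub_mul_exp_bilinear_prod hv hαv)]
  simp_rw [integral_mul_exp_bilinear_gaussianReal]
  exact integral_sub_mul_exp_quadratic_gaussianReal hv hαv

end BrownianIncrement

section Independence

variable {Ω β β' E : Type*} [MeasurableSpace Ω] {P : Measure Ω} [IsFiniteMeasure P]
  [MeasurableSpace β] [MeasurableSpace β'] [NormedAddCommGroup E] {X : Ω → β} {Y : Ω → β'}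
  {g : β × β' → E}

lemma IndepFun.integrable_comp_prodMk (hXY : IndepFun X Y P) (hX : AEMeasurable X P)
    (hY : AEMeasurable Y P) (hg : Integrable g ((P.map X).prod (P.map Y))) :
    Integrable (fun ω ↦ g (X ω, Y ω)) P := by
  rw [← hXY.map_prod_eq_prod_map_map hX hY] at hg
  exact (integrable_map_measure hg.aestronglyMeasurable (hX.prodMk hY)).1 hg

lemma IndepFun.integral_comp_prodMk [NormedSpace ℝ E] (hXY : IndepFun X Y P)
    (hX : AEMeasurable X P) (hY : AEMeasurable Y P)
    (hg : AEStronglyMeasurable g ((P.map X).prod (P.map Y))) :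
    ∫ ω, g (X ω, Y ω) ∂P = ∫ p, g p ∂(P.map X).prod (P.map Y) := by
  rw [← hXY.map_prod_eq_prod_map_map hX hY] at hg ⊢
  exact (integral_map (hX.prodMk hY) hg).symm

end Independence

section OnePeriod

variable {m v α β s c : ℝ} {w : ℝ≥0}

lemma sub_mul_exp_add_sub_one (x a c : ℝ) :
    (x - m) * (exp (a + c) - 1) = exp c * ((x - m) * exp a) - (x - m) := by
  rw [Real.exp_add]
  ring

lemma integrable_sub_mul_exp_sub_one_prod (hv : 0 < v)
    (hαv : 2 * (α + w * s ^ 2 / 2) * v < 1) :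
    Integrable
      (fun p : ℝ × ℝ ↦ (p.1 - m) * (exp (α * p.1 ^ 2 + β * p.1 + s * p.1 * p.2 + c) - 1))
      ((gaussianReal m v.toNNReal).prod (gaussianReal 0 w)) := by
  simp_rw [sub_mul_exp_add_sub_one]
  exact ((integrable_sub_mul_exp_bilinear_prod hv hαv).const_mul _).sub
    ((((memLp_id_gaussianReal 1).integrable le_rfl).sub (integrable_const m)).comp_fst _)

lemma integral_sub_mul_exp_sub_one_prod (hv : 0 < v)
    (hαv : 2 * (α + w * s ^ 2 / 2) * v < 1) :
    ∫ p, (p.1 - m) * (exp (α * p.1 ^ 2 + β * p.1 + s * p.1 * p.2 + c) - 1)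
        ∂(gaussianReal m v.toNNReal).prod (gaussianReal 0 w)
      = v * (β + 2 * (α + w * s ^ 2 / 2) * m) * (1 - 2 * (α + w * s ^ 2 / 2) * v) ^ (-(3 / 2) : ℝ)
          * exp ((α + w * s ^ 2 / 2) * m ^ 2 + β * m + c
            + (β + 2 * (α + w * s ^ 2 / 2) * m) ^ 2 * v
              / (2 * (1 - 2 * (α + w * s ^ 2 / 2) * v))) := by
  have hid : Integrable (fun x ↦ x) (gaussianReal m v.toNNReal) :=
    (memLp_id_gaussianReal 1).integrable le_rfl
  have hfst : Integrable (fun p : ℝ × ℝ ↦ p.1 - m)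
      ((gaussianReal m v.toNNReal).prod (gaussianReal 0 w)) :=
    (hid.sub (integrable_const m)).comp_fst _
  simp_rw [sub_mul_exp_add_sub_one]
  rw [integral_sub ((integrable_sub_mul_exp_bilinear_prod hv hαv).const_mul _) hfst,
    integral_const_mul,
    integral_sub_mul_exp_bilinear_prod hv hαv, integral_fun_fst (fun x ↦ x - m),
    integral_sub hid (integrable_const m), integral_id_gaussianReal, integral_const]
  simp only [probReal_univ, one_smul, sub_self, sub_zero]
  rw [add_right_comm _ c, Real.exp_add _ c]
  ring

variable {Ω : Type*} [MeasurableSpace Ω] {P : Measure Ω} [IsFiniteMeasure P] {X Y : Ω → ℝ}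

lemma integrable_sub_mul_exp_sub_one_of_indepFun (hXY : IndepFun X Y P) (hX : Measurable X)
    (hY : Measurable Y) (hXlaw : P.map X = gaussianReal m v.toNNReal)
    (hYlaw : P.map Y = gaussianReal 0 w) (hv : 0 < v) (hαv : 2 * (α + w * s ^ 2 / 2) * v < 1) :
    Integrable (fun ω ↦ (X ω - m) * (exp (α * X ω ^ 2 + β * X ω + s * X ω * Y ω + c) - 1)) P := by
  have hint := integrable_sub_mul_exp_sub_one_prod (m := m) (β := β) (c := c) hv hαv
  rw [← hXlaw, ← hYlaw] at hint
  exact hXY.integrable_comp_prodMk hX.aemeasurable hY.aemeasurable hint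

lemma integral_sub_mul_exp_sub_one_of_indepFun (hXY : IndepFun X Y P) (hX : Measurable X)
    (hY : Measurable Y) (hXlaw : P.map X = gaussianReal m v.toNNReal)
    (hYlaw : P.map Y = gaussianReal 0 w) (hv : 0 < v) (hαv : 2 * (α + w * s ^ 2 / 2) * v < 1) :
    ∫ ω, (X ω - m) * (exp (α * X ω ^ 2 + β * X ω + s * X ω * Y ω + c) - 1) ∂P
      = v * (β + 2 * (α + w * s ^ 2 / 2) * m) * (1 - 2 * (α + w * s ^ 2 / 2) * v) ^ (-(3 / 2) : ℝ)
          * exp ((α + w * s ^ 2 / 2) * m ^ 2 + β * m + c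
            + (β + 2 * (α + w * s ^ 2 / 2) * m) ^ 2 * v
              / (2 * (1 - 2 * (α + w * s ^ 2 / 2) * v))) := by
  rw [← integral_sub_mul_exp_sub_one_prod hv hαv, ← hXlaw, ← hYlaw]
  refine hXY.integral_comp_prodMk
    (g := fun p ↦ (p.1 - m) * (exp (α * p.1 ^ 2 + β * p.1 + s * p.1 * p.2 + c) - 1))
    hX.aemeasurable hY.aemeasurable ?_
  fun_prop

end OnePeriod

end ProbabilityTheory

noncomputable def periodSignal (μ r σ γ lam ψ θ Δ x y : ℝ) : ℝ :=
  γ * σ ^ 2 * (x - θ) / (lam * (1 - γ)) *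
    ((exp ((r + (μ - r) * x - (1 / 2) * σ ^ 2 * x ^ 2) * Δ + σ * x * y)) ^ (1 - γ)
      * exp ((-ψ + lam * (1 - γ) / 2) * Δ) - 1)

lemma ehat_eq_sum_periodSignal (μ r σ γ lam T ψ θ : ℝ) (K : ℕ) {Ω : Type}
    (a ΔB : Fin K → Ω → ℝ) (ω : Ω) :
    ehat μ r σ γ lam T ψ θ K a ΔB ω
      = ∑ k, periodSignal μ r σ γ lam ψ θ (T / K) (a k ω) (ΔB k ω) :=
  rfl

section PeriodSignal

variable {μ r σ γ lam ψ θ Δ : ℝ}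

lemma periodSignal_eq (x y : ℝ) :
    periodSignal μ r σ γ lam ψ θ Δ x y
      = γ * σ ^ 2 / (lam * (1 - γ)) * ((x - θ)
          * (exp (-(1 / 2) * σ ^ 2 * (1 - γ) * Δ * x ^ 2 + (μ - r) * (1 - γ) * Δ * x
              + σ * (1 - γ) * x * y + ((1 - γ) * (r + lam / 2) - ψ) * Δ) - 1)) := by
  rw [periodSignal, ← Real.exp_mul, ← Real.exp_add]
  ring_nf

lemma one_sub_two_mul_tilt_mul_var (hσ : σ ≠ 0) (hγ : γ ≠ 0) (hΔ : 0 ≤ Δ) :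
    1 - 2 * (-(1 / 2) * σ ^ 2 * (1 - γ) * Δ + Δ.toNNReal * (σ * (1 - γ)) ^ 2 / 2)
        * (lam / (γ * σ ^ 2))
      = 1 - (γ - 1) * lam * Δ := by
  rw [Real.coe_toNNReal _ hΔ]
  field_simp
  ring

variable {Ω : Type*} [MeasurableSpace Ω] {P : Measure Ω} [IsFiniteMeasure P] {X Y : Ω → ℝ}

lemma integrable_periodSignal (hXY : IndepFun X Y P) (hX : Measurable X) (hY : Measurable Y)
    (hXlaw : P.map X = gaussianReal θ (lam / (γ * σ ^ 2)).toNNReal)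
    (hYlaw : P.map Y = gaussianReal 0 Δ.toNNReal) (hσ : σ ≠ 0) (hγ : 0 < γ) (hlam : 0 < lam)
    (hΔ : 0 ≤ Δ) (hpos : 0 < 1 - (γ - 1) * lam * Δ) :
    Integrable (fun ω ↦ periodSignal μ r σ γ lam ψ θ Δ (X ω) (Y ω)) P := by
  have hαv := one_sub_two_mul_tilt_mul_var (lam := lam) hσ hγ.ne' hΔ
  simp_rw [periodSignal_eq]
  exact (integrable_sub_mul_exp_sub_one_of_indepFun hXY hX hY hXlaw hYlaw (by positivity)
    (by linarith)).const_mul _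

lemma integral_periodSignal (hXY : IndepFun X Y P) (hX : Measurable X) (hY : Measurable Y)
    (hXlaw : P.map X = gaussianReal θ (lam / (γ * σ ^ 2)).toNNReal)
    (hYlaw : P.map Y = gaussianReal 0 Δ.toNNReal) (hσ : σ ≠ 0) (hγ : 0 < γ) (hγ1 : γ ≠ 1)
    (hlam : 0 < lam) (hΔ : 0 ≤ Δ) {A₁ A₂ A₃ : ℝ}
    (hA₁ : A₁ = (1 - γ) * (r + (μ - r) * θ - (γ / 2) * σ ^ 2 * θ ^ 2 + lam / 2) - ψ)
    (hA₂ : A₂ = (1 - γ) * (μ - r - θ * γ * σ ^ 2) * √(lam / (γ * σ ^ 2)))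
    (hA₃ : A₃ = (γ - 1) * lam) (hpos : 0 < 1 - A₃ * Δ) :
    ∫ ω, periodSignal μ r σ γ lam ψ θ Δ (X ω) (Y ω) ∂P
      = Δ * (μ - r - θ * γ * σ ^ 2) * exp (A₁ * Δ + A₂ ^ 2 * Δ ^ 2 / (2 * (1 - A₃ * Δ)))
          * (1 - A₃ * Δ) ^ (-(3 / 2) : ℝ) := by
  have hv : 0 < lam / (γ * σ ^ 2) := by positivity
  have hκ := one_sub_two_mul_tilt_mul_var (lam := lam) hσ hγ.ne' hΔ
  rw [← hA₃] at hκ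
  have hA₂sq : A₂ ^ 2 = ((1 - γ) * (μ - r - θ * γ * σ ^ 2)) ^ 2 * (lam / (γ * σ ^ 2)) := by
    rw [hA₂, mul_pow _ √_, Real.sq_sqrt hv.le]
  simp_rw [periodSignal_eq]
  rw [integral_const_mul, integral_sub_mul_exp_sub_one_of_indepFun hXY hX hY hXlaw hYlaw hv
    (by linarith), hκ, Real.coe_toNNReal _ hΔ, hA₁, hA₂sq]
  have h1γ : 1 - γ ≠ 0 := sub_ne_zero.2 (Ne.symm hγ1)
  field_simp
  ring_nf

end PeriodSignal

/-- Exact closed-form mean of the discretized learning signal (proof of Proposition 1):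
with `A₁ = (1−γ)(r + (μ−r)θ − (γ/2)σ²θ² + λ/2) − ψ`,
`A₂ = (1−γ)(μ − r − θγσ²)√(λ/(γσ²))` and `A₃ = (γ−1)λ`, if `1 − A₃Δt > 0` then
`E[ê(ψ,θ)] = T(μ − r − θγσ²) exp(A₁Δt + A₂²Δt²/(2(1 − A₃Δt))) (1 − A₃Δt)^{−3/2}`. -/
theorem stmt13 (μ r σ γ lam T ψ θ : ℝ) (hσ : 0 < σ) (hγ : 0 < γ) (hγ1 : γ ≠ 1)
    (hlam : 0 < lam) (hT : 0 < T) (K : ℕ) (hK : 1 ≤ K)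
    (Ω : Type) (_ : MeasureSpace Ω) (_ : IsProbabilityMeasure (ℙ : Measure Ω))
    (a ΔB : Fin K → Ω → ℝ)
    (hameas : ∀ k, Measurable (a k)) (hBmeas : ∀ k, Measurable (ΔB k))
    (halaw : ∀ k, Measure.map (a k) ℙ = gaussianReal θ (lam / (γ * σ^2)).toNNReal)
    (hBlaw : ∀ k, Measure.map (ΔB k) ℙ = gaussianReal 0 (T / (K : ℝ)).toNNReal)
    (hindep : iIndepFun (Sum.elim a ΔB) ℙ)
    (A₁ A₂ A₃ : ℝ)
    (hA₁ : A₁ = (1 - γ) * (r + (μ - r) * θ - (γ / 2) * σ^2 * θ^2 + lam / 2) - ψ)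
    (hA₂ : A₂ = (1 - γ) * (μ - r - θ * γ * σ^2) * Real.sqrt (lam / (γ * σ^2)))
    (hA₃ : A₃ = (γ - 1) * lam)
    (hpos : 0 < 1 - A₃ * (T / (K : ℝ))) :
    (∫ ω, ehat μ r σ γ lam T ψ θ K a ΔB ω)
      = T * (μ - r - θ * γ * σ^2)
        * Real.exp (A₁ * (T / (K : ℝ))
            + A₂^2 * (T / (K : ℝ))^2 / (2 * (1 - A₃ * (T / (K : ℝ)))))
        * (1 - A₃ * (T / (K : ℝ))) ^ (-(3/2) : ℝ) := by
  have hΔ : 0 ≤ T / (K : ℝ) := by positivity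
  have hind (k : Fin K) : IndepFun (a k) (ΔB k) ℙ := by
    simpa using hindep.indepFun (i := Sum.inl k) (j := Sum.inr k) (by simp)
  simp_rw [ehat_eq_sum_periodSignal]
  rw [integral_finsetSum _ fun k _ ↦ integrable_periodSignal (hind k) (hameas k) (hBmeas k)
      (halaw k) (hBlaw k) hσ.ne' hγ hlam hΔ (hA₃ ▸ hpos),
    Finset.sum_congr rfl fun k _ ↦ integral_periodSignal (hind k) (hameas k) (hBmeas k)
      (halaw k) (hBlaw k) hσ.ne' hγ hγ1 hlam hΔ hA₁ hA₂ hA₃ hpos,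
    Finset.sum_const, Finset.card_univ, Fintype.card_fin, nsmul_eq_mul]
  have hK0 : (K : ℝ) ≠ 0 := by positivity
  field_simp
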